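/- Let s be a positive integer, let r_1, …, r_s be positive integers, and let n_1 < n_2 < ⋯ < n_s be real numbers with n_1 ≥ 0 and, in case s ≥ 2, n_{s-1} ≤ n_s − 1. Set f(x) = (x − n_1)^{r_1} ⋯ (x − n_s)^{r_s}. If m is a real number with 0 ≤ m ≤ n_s − 1, then ρ((x − m)·f(x) − 1) < ρ(f(x) − 1). -/

import Mathlib

/-!
For `F = ∏ (X - cᵢ)^kᵢ` with all `cᵢ ∈ [0, N]` and `N` among them, `ρ(F - 1)` is the
unique `β > N` with `F(β) = 1`: `|F(z)| ≥ F(|z|)` whenever `|z| ≥ N`, and `F` increases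
beyond `N`.
Applying this to `f` and to `(X - m) f` gives roots `β` and `α`; since `α - m > 1`,
`f(α) = 1 / (α - m) < 1 = f(β)`, hence `α < β`.
-/

open Polynomial

/-- `rho p` is the maximum (supremum) of the moduli of the complex roots of the
real polynomial `p`. -/
noncomputable def rho (p : Polynomial ℝ) : ℝ :=
  sSup {t : ℝ | ∃ z : ℂ, (Polynomial.aeval z) p = 0 ∧ ‖z‖ = t}

theorem rho_eq_of_forall_norm_le {p : ℝ[X]} {β : ℝ} (hβ0 : 0 ≤ β)
    (hβ : aeval (β : ℂ) p = 0) (hle : ∀ z : ℂ, aeval z p = 0 → ‖z‖ ≤ β) : rho p = β :=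
  IsGreatest.csSup_eq
    ⟨⟨β, hβ, by rw [Complex.norm_real, Real.norm_of_nonneg hβ0]⟩,
      by rintro _ ⟨z, hz, rfl⟩; exact hle z hz⟩

section ProdSubPow

variable {ι : Type*} [Fintype ι] {c : ι → ℝ} {k : ι → ℕ}

theorem aeval_prod_X_sub_C_pow (z : ℂ) :
    aeval z (∏ i, (X - C (c i)) ^ k i) = ∏ i, (z - c i) ^ k i := by
  simp

theorem strictMonoOn_prod_sub_pow [Nonempty ι] (hk : ∀ i, 0 < k i) :
    StrictMonoOn (fun t => ∏ i, (t - c i) ^ k i) {t | ∀ i, c i < t} := fun s hs t _ hst =>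
  Finset.prod_lt_prod_of_nonempty (fun i _ => pow_pos (sub_pos.2 (hs i)) _)
    (fun i _ => pow_lt_pow_left₀ (by linarith) (sub_pos.2 (hs i)).le (hk i).ne')
    Finset.univ_nonempty

theorem prod_sub_pow_le_norm_prod (hc0 : ∀ i, 0 ≤ c i) {z : ℂ} (hz : ∀ i, c i ≤ ‖z‖) :
    ∏ i, (‖z‖ - c i) ^ k i ≤ ‖∏ i, (z - c i) ^ k i‖ := by
  rw [norm_prod]
  refine Finset.prod_le_prod (fun i _ => pow_nonneg (sub_nonneg.2 (hz i)) _) fun i _ => ?_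
  rw [norm_pow]
  refine pow_le_pow_left₀ (sub_nonneg.2 (hz i)) ?_ _
  simpa [Complex.norm_real, Real.norm_of_nonneg (hc0 i)] using norm_sub_norm_le z (c i)

theorem exists_gt_prod_sub_pow_eq_one (hk : ∀ i, 0 < k i) {N : ℝ} (hcN : ∀ i, c i ≤ N)
    {i₀ : ι} (hi₀ : c i₀ = N) : ∃ β, N < β ∧ ∏ i, (β - c i) ^ k i = 1 := by
  set F : ℝ → ℝ := fun t => ∏ i, (t - c i) ^ k i
  have hFN : F N = 0 :=
    Finset.prod_eq_zero (Finset.mem_univ i₀) (by simp [hi₀, zero_pow (hk i₀).ne'])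
  have hFN1 : 1 ≤ F (N + 1) :=
    Finset.one_le_prod fun i _ => one_le_pow₀ (by linarith [hcN i])
  have hcont : ContinuousOn F (Set.Icc N (N + 1)) := by fun_prop
  obtain ⟨β, hβ, hFβ⟩ :=
    intermediate_value_Icc (by linarith) hcont ⟨hFN.le.trans zero_le_one, hFN1⟩
  refine ⟨β, hβ.1.lt_of_ne ?_, hFβ⟩
  rintro rfl
  simp [hFN] at hFβ

theorem rho_prod_X_sub_C_pow_sub_one [Nonempty ι] (hk : ∀ i, 0 < k i) (hc0 : ∀ i, 0 ≤ c i)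
    {β : ℝ} (hcβ : ∀ i, c i < β) (hβ : ∏ i, (β - c i) ^ k i = 1) :
    rho (∏ i, (X - C (c i)) ^ k i - 1) = β := by
  have hβ0 : 0 ≤ β := (hc0 (Classical.arbitrary ι)).trans (hcβ _).le
  refine rho_eq_of_forall_norm_le hβ0 ?_ fun z hz => ?_
  · rw [map_sub, aeval_prod_X_sub_C_pow, map_one, sub_eq_zero]
    exact_mod_cast hβ
  · rw [map_sub, aeval_prod_X_sub_C_pow, map_one, sub_eq_zero] at hz
    by_contra! hlt
    have hzc : ∀ i, c i < ‖z‖ := fun i => (hcβ i).trans hlt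
    have := calc
      (1 : ℝ) = ∏ i, (β - c i) ^ k i := hβ.symm
      _ < ∏ i, (‖z‖ - c i) ^ k i := strictMonoOn_prod_sub_pow hk hcβ hzc hlt
      _ ≤ ‖∏ i, (z - c i) ^ k i‖ := prod_sub_pow_le_norm_prod hc0 fun i => (hzc i).le
    simp [hz] at this

end ProdSubPow

/-- With `f(x) = (x - n₁)^{r₁} ⋯ (x - n_s)^{r_s}` as before, if
`0 ≤ m ≤ n_s - 1`, then `ρ((x - m)·f(x) - 1) < ρ(f(x) - 1)`. -/
theorem statement2 (s : ℕ) (hs : 0 < s) (r : Fin s → ℕ) (hr : ∀ i, 0 < r i)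
    (n : Fin s → ℝ) (hmono : StrictMono n) (hn0 : 0 ≤ n ⟨0, hs⟩)
    (m : ℝ) (hm0 : 0 ≤ m) (hm1 : m ≤ n ⟨s - 1, by omega⟩ - 1) :
    rho ((X - C m) * (∏ i : Fin s, (X - C (n i)) ^ r i) - 1) <
      rho (∏ i : Fin s, (X - C (n i)) ^ r i - 1) := by
  have : Nonempty (Fin s) := ⟨⟨0, hs⟩⟩
  set N := n ⟨s - 1, by omega⟩
  have hnN : ∀ i, n i ≤ N := fun i => hmono.monotone (Fin.mk_le_mk.2 (by omega))
  have hn0' : ∀ i, 0 ≤ n i :=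
    fun i => hn0.trans (hmono.monotone (Fin.mk_le_mk.2 (Nat.zero_le _)))
  obtain ⟨β, hNβ, hβ⟩ := exists_gt_prod_sub_pow_eq_one hr hnN rfl
  set c : Fin (s + 1) → ℝ := Fin.cons m n
  set k : Fin (s + 1) → ℕ := Fin.cons 1 r
  have hk : ∀ i, 0 < k i := Fin.cases one_pos hr
  have hcN : ∀ i, c i ≤ N := Fin.cases (show m ≤ N by linarith) hnN
  have hc0 : ∀ i, 0 ≤ c i := Fin.cases hm0 hn0'
  obtain ⟨α, hNα, hα⟩ :=
    exists_gt_prod_sub_pow_eq_one hk hcN (i₀ := Fin.succ ⟨s - 1, by omega⟩) rfl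
  have hpoly : (X - C m) * ∏ i, (X - C (n i)) ^ r i = ∏ i, (X - C (c i)) ^ k i := by
    simp [Fin.prod_univ_succ, c, k]
  rw [hpoly, rho_prod_X_sub_C_pow_sub_one hk hc0 (fun i => (hcN i).trans_lt hNα) hα,
    rho_prod_X_sub_C_pow_sub_one hr hn0' (fun i => (hnN i).trans_lt hNβ) hβ]
  have hα' : (α - m) * ∏ i, (α - n i) ^ r i = 1 := by
    simpa [Fin.prod_univ_succ, c, k] using hα
  have hFα : ∏ i, (α - n i) ^ r i < ∏ i, (β - n i) ^ r i := by
    have : 0 ≤ ∏ i, (α - n i) ^ r i :=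
      Finset.prod_nonneg fun i _ => pow_nonneg (by linarith [hnN i]) _
    nlinarith
  exact (strictMonoOn_prod_sub_pow hr).lt_iff_lt (fun i => (hnN i).trans_lt hNα)
    (fun i => (hnN i).trans_lt hNβ) |>.1 hFα
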